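/- Let x, y, z_1,...,z_k > 0 be reals with 2xy > Σz_i^2, let a, b, h be integers with a ≥ 2 and c_i integers with a > c_i ≥ 1. If (a-2)y + (2h-2+b)x ≥ 0, then it is impossible to have both (a-2)y + (2h-2+b)x - Σz_i(c_i-1) < 0 and Σ(c_i-1)^2 ≤ 2(a-2)(2h-2+b). -/
import Mathlib


/-- The case `M = (S² × Σ_h) # k (CP²-bar)`: with `a ≥ 2`, `a > cᵢ ≥ 1`,
`2xy > ∑ zᵢ²` and `(a-2)y + (2h-2+b)x ≥ 0`, it is impossible to have both
`(K+[F])·ω < 0` and `(K+[F])² ≥ 0`. -/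
theorem ruled_blowup_impossible
    (k : ℕ) (x y : ℝ) (z : Fin k → ℝ)
    (hx : 0 < x) (hy : 0 < y) (hz : ∀ i, 0 < z i)
    (hlight : ∑ i, (z i) ^ 2 < 2 * x * y)
    (a b h : ℤ) (ha : 2 ≤ a) (c : Fin k → ℤ) (hc : ∀ i, 1 ≤ c i ∧ c i < a)
    (hnn : 0 ≤ ((a : ℝ) - 2) * y + ((2 * h - 2 + b : ℤ) : ℝ) * x) :
    ¬ ((((a : ℝ) - 2) * y + ((2 * h - 2 + b : ℤ) : ℝ) * x
          - ∑ i, z i * ((c i : ℝ) - 1) < 0) ∧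
        (∑ i, ((c i : ℝ) - 1) ^ 2 ≤ 2 * ((a : ℝ) - 2) * ((2 * h - 2 + b : ℤ) : ℝ))) := by
  rintro ⟨hneg, hsq⟩
  set p : ℝ := (a : ℝ) - 2 with hp
  set q : ℝ := ((2 * h - 2 + b : ℤ) : ℝ) with hq
  set S : ℝ := ∑ i, z i * ((c i : ℝ) - 1) with hS
  set Q : ℝ := ∑ i, ((c i : ℝ) - 1) ^ 2 with hQdef
  set Z : ℝ := ∑ i, (z i) ^ 2 with hZ
  have hCS : S ^ 2 ≤ Z * Q := by
    have := Finset.sum_mul_sq_le_sq_mul_sq Finset.univ z (fun i => ((c i : ℝ) - 1))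
    simpa [hS, hQdef, hZ] using this
  have hQ0 : 0 ≤ Q := Finset.sum_nonneg fun i _ => sq_nonneg _
  rcases eq_or_lt_of_le hQ0 with hQ | hQ
  · -- all cᵢ = 1, so S = 0
    have hall : ∀ i ∈ Finset.univ, ((c i : ℝ) - 1) ^ 2 = 0 := by
      intro i _
      have := (Finset.sum_eq_zero_iff_of_nonneg fun i _ => sq_nonneg (((c i : ℝ) - 1))).1
        hQ.symm i (Finset.mem_univ i)
      exact this
    have hS0 : S = 0 := Finset.sum_eq_zero fun i _ => by
      have h2 := hall i (Finset.mem_univ i)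
      have : (c i : ℝ) - 1 = 0 := by
        have := sq_eq_zero_iff.1 h2; exact this
      rw [this, mul_zero]
    rw [hS0] at hneg
    linarith
  · have hZQ : Z * Q < 2 * x * y * Q := by
      exact mul_lt_mul_of_pos_right hlight hQ
    have hxy : 0 < x * y := mul_pos hx hy
    have h2 : 2 * x * y * Q ≤ 2 * x * y * (2 * p * q) := by
      apply mul_le_mul_of_nonneg_left hsq
      positivity
    have h3 : 4 * (x * y) * (p * q) ≤ (p * y + q * x) ^ 2 := by
      nlinarith [sq_nonneg (p * y - q * x)]
    have h4 : (p * y + q * x) ^ 2 < S ^ 2 := by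
      nlinarith
    nlinarith
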